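/- Let H be a Hilbert space with orthogonal decomposition H = P ⊕ Q (P finite-dimensional), let J : H → ℝ be Fréchet differentiable, and let η̃ : P → Q be differentiable such that for all μ ∈ P, the Q-component of the gradient vanishes at μ + η̃(μ), i.e., Q∇J(μ + η̃(μ)) = 0. Define W : P → ℝ, W(μ) = J(μ + η̃(μ)). Then ∇W(μ) = P∇J(μ + η̃(μ)); in particular μ is a critical point of W if and only if μ + η̃(μ) is a critical point of J restricted to the graph condition, i.e. ∇J(μ + η̃(μ)) = 0. -/

import Mathlib

/-- Let `H = P ⊕ Pᗮ` with `P` finite-dimensional, `J : H → ℝ`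
differentiable, and `η̃ : P → Pᗮ` differentiable with the tail equation
`Q∇J(μ + η̃(μ)) = 0`. Then `W(μ) := J(μ + η̃(μ))` has gradient
`∇W(μ) = P∇J(μ + η̃(μ))`, and `μ` is a critical point of `W` iff
`∇J(μ + η̃(μ)) = 0`. -/
theorem reduced_functional_gradient
    {H : Type*} [NormedAddCommGroup H] [InnerProductSpace ℝ H] [CompleteSpace H]
    (P : Submodule ℝ H) [FiniteDimensional ℝ P]
    (J : H → ℝ) (hJ : Differentiable ℝ J)
    (ηt : P → Pᗮ) (hηt : Differentiable ℝ ηt)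
    (htail : ∀ μ : P, Submodule.orthogonalProjectionOnto Pᗮ (gradient J ((μ : H) + (ηt μ : H))) = 0)
    (W : P → ℝ) (hW : ∀ μ : P, W μ = J ((μ : H) + (ηt μ : H))) :
    (∀ μ : P, gradient W μ = Submodule.orthogonalProjectionOnto P (gradient J ((μ : H) + (ηt μ : H)))) ∧
    (∀ μ : P, gradient W μ = 0 ↔ gradient J ((μ : H) + (ηt μ : H)) = 0) := by
  -- For each μ, the gradient of J at x := μ + ηt μ lies in P (tail equation).
  have hrepr : ∀ μ : P, gradient J ((μ : H) + (ηt μ : H)) =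
      (Submodule.orthogonalProjectionOnto P (gradient J ((μ : H) + (ηt μ : H))) : H) := by
    intro μ
    have := Submodule.starProjection_add_starProjection_orthogonal (K := P)
      (gradient J ((μ : H) + (ηt μ : H)))
    rw [Submodule.starProjection_apply, Submodule.starProjection_apply, htail μ] at this
    simpa using this.symm
  have key : ∀ μ : P, gradient W μ =
      Submodule.orthogonalProjectionOnto P (gradient J ((μ : H) + (ηt μ : H))) := by
    intro μ
    set x : H := (μ : H) + (ηt μ : H) with hx
    set g : H := gradient J x with hg
    set D : P →L[ℝ] Pᗮ := fderiv ℝ ηt μ with hD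
    -- derivative of ν ↦ (ν : H) + (ηt ν : H)
    have hf : HasFDerivAt (fun ν : P => (ν : H) + (ηt ν : H))
        (P.subtypeL + Pᗮ.subtypeL.comp D) μ := by
      exact (P.subtypeL.hasFDerivAt).add
        ((Pᗮ.subtypeL.hasFDerivAt).comp μ ((hηt μ).hasFDerivAt))
    have hJx : HasFDerivAt J (InnerProductSpace.toDual ℝ H g) x :=
      ((hJ x).hasGradientAt).hasFDerivAt
    have hWd : HasFDerivAt W
        ((InnerProductSpace.toDual ℝ H g).comp (P.subtypeL + Pᗮ.subtypeL.comp D)) μ := by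
      have : W = fun ν : P => J ((ν : H) + (ηt ν : H)) := funext hW
      rw [this]
      exact hJx.comp μ hf
    have hG : HasGradientAt W ((Submodule.orthogonalProjectionOnto P g : P)) μ := by
      rw [hasGradientAt_iff_hasFDerivAt]
      refine hWd.congr_fderiv ?_
      symm
      ext h
      have hgP : g = (Submodule.orthogonalProjectionOnto P g : H) := hrepr μ
      have hzero : inner ℝ g ((D h : H)) = (0 : ℝ) := by
        rw [hgP]
        exact ((D h).2 _ (Submodule.orthogonalProjectionOnto P g).2)
      simp only [InnerProductSpace.toDual_apply_apply, ContinuousLinearMap.comp_apply,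
        ContinuousLinearMap.add_apply, Submodule.subtypeL_apply, Submodule.coe_inner]
      rw [inner_add_right, hzero, add_zero]
      conv_rhs => rw [hgP]
    exact hG.gradient
  refine ⟨key, fun μ => ?_⟩
  constructor
  · intro h0
    rw [hrepr μ, ← key μ, h0, Submodule.coe_zero]
  · intro h0
    rw [key μ, h0]
    simp
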